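/- Fix s0, v0, s_f, v_f ∈ ℝ and let 𝒜₀₀ := {u ∈ L²([0,1];ℝ) : s0 + v0 + ∫_0^1 (1−τ)·u(τ) dτ = s_f and v0 + ∫_0^1 u(τ) dτ = v_f}. For u⁻ ∈ L²([0,1];ℝ), define c1 := 12·( s0 + v0 − s_f + ∫_0^1 (1−τ)u⁻(τ)dτ ) − 6·( v0 − v_f + ∫_0^1 u⁻(τ)dτ ) and c2 := −6·( s0 + v0 − s_f + ∫_0^1 (1−τ)u⁻(τ)dτ ) + 2·( v0 − v_f + ∫_0^1 u⁻(τ)dτ ). Then the function P(t) := u⁻(t) + c1·t + c2 is the metric projection of u⁻ onto 𝒜₀₀: P ∈ 𝒜₀₀ and ‖u⁻ − P‖_{L²} ≤ ‖u⁻ − y‖_{L²} for every y ∈ 𝒜₀₀. -/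

import Mathlib

/-!
The constraints defining `𝒜₀₀` are `⟨1 - τ, y⟩ = sf - s0 - v0` and `⟨1, y⟩ = vf - v0`, so the
difference `P - y` of two admissible controls is orthogonal to every affine function. The
constants `c1, c2` are exactly those making `P` admissible, and the residual
`u - P = -(c1 t + c2)` is affine; hence `‖u - y‖² = ‖u - P‖² + ‖P - y‖² ≥ ‖u - P‖²`.
-/

open MeasureTheory
open scoped ENNReal

section IntervalL2

variable {a b : ℝ} {f g : ℝ → ℝ}

lemma MeasureTheory.MemLp.intervalIntegrable {p : ℝ≥0∞} (hp : 1 ≤ p) (hab : a ≤ b)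
    (hf : MemLp f p (volume.restrict (Set.Icc a b))) : IntervalIntegrable f volume a b :=
  (intervalIntegrable_iff_integrableOn_Icc_of_le hab).2 (hf.integrable hp)

lemma ContinuousOn.memLp_restrict_Icc {p : ℝ≥0∞} (hf : ContinuousOn f (Set.Icc a b)) :
    MemLp f p (volume.restrict (Set.Icc a b)) := by
  obtain ⟨C, hC⟩ := isCompact_Icc.exists_bound_of_continuousOn hf
  exact .of_bound (hf.aestronglyMeasurable measurableSet_Icc) C
    ((ae_restrict_iff' measurableSet_Icc).2 (.of_forall hC))

lemma integral_sq_le_integral_add_sq_of_integral_mul_eq_zero (hab : a ≤ b)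
    (hf : MemLp f 2 (volume.restrict (Set.Icc a b)))
    (hg : MemLp g 2 (volume.restrict (Set.Icc a b)))
    (horth : ∫ t in a..b, f t * g t = 0) :
    ∫ t in a..b, f t ^ 2 ≤ ∫ t in a..b, (f t + g t) ^ 2 := by
  have hf2 : IntervalIntegrable (fun t => f t ^ 2) volume a b :=
    (intervalIntegrable_iff_integrableOn_Icc_of_le hab).2 hf.integrable_sq
  have hg2 : IntervalIntegrable (fun t => g t ^ 2) volume a b :=
    (intervalIntegrable_iff_integrableOn_Icc_of_le hab).2 hg.integrable_sq
  have hfg : IntervalIntegrable (fun t => 2 * (f t * g t)) volume a b :=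
    ((intervalIntegrable_iff_integrableOn_Icc_of_le hab).2 (hf.integrable_mul hg)).const_mul 2
  have hexpand : ∫ t in a..b, (f t + g t) ^ 2
      = (∫ t in a..b, f t ^ 2) + 2 * (∫ t in a..b, f t * g t) + ∫ t in a..b, g t ^ 2 := by
    simp_rw [add_sq, mul_assoc]
    rw [intervalIntegral.integral_add (hf2.add hfg) hg2, intervalIntegral.integral_add hf2 hfg,
      intervalIntegral.integral_const_mul]
  rw [hexpand, horth]
  linarith [intervalIntegral.integral_nonneg (μ := volume) hab fun t _ => sq_nonneg (g t)]

end IntervalL2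

section AffineMoments

variable {f : ℝ → ℝ} (α β : ℝ)

lemma integral_add_affine (hf : IntervalIntegrable f volume 0 1) :
    ∫ t in (0:ℝ)..1, (f t + (α * t + β)) = (∫ t in (0:ℝ)..1, f t) + (α / 2 + β) := by
  rw [intervalIntegral.integral_add hf (Continuous.intervalIntegrable (by fun_prop) _ _),
    intervalIntegral.integral_add (Continuous.intervalIntegrable (by fun_prop) _ _)
      (Continuous.intervalIntegrable (by fun_prop) _ _),
    intervalIntegral.integral_const_mul, integral_id, intervalIntegral.integral_const, smul_eq_mul]
  ring

lemma integral_one_sub_mul_add_affine (hf : IntervalIntegrable f volume 0 1) :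
    ∫ t in (0:ℝ)..1, (1 - t) * (f t + (α * t + β))
      = (∫ t in (0:ℝ)..1, (1 - t) * f t) + (α / 6 + β / 2) := by
  have hsplit : (fun t : ℝ => (1 - t) * (f t + (α * t + β)))
      = fun t => (1 - t) * f t + (-α * t ^ 2 + ((α - β) * t + β)) := by
    funext t; ring
  rw [hsplit, intervalIntegral.integral_add (hf.continuousOn_mul (by fun_prop))
      (Continuous.intervalIntegrable (by fun_prop) _ _),
    intervalIntegral.integral_add (Continuous.intervalIntegrable (by fun_prop) _ _)
      (Continuous.intervalIntegrable (by fun_prop) _ _),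
    intervalIntegral.integral_add (Continuous.intervalIntegrable (by fun_prop) _ _)
      (Continuous.intervalIntegrable (by fun_prop) _ _),
    intervalIntegral.integral_const_mul, intervalIntegral.integral_const_mul, integral_pow,
    integral_id, intervalIntegral.integral_const, smul_eq_mul]
  ring

lemma integral_affine_mul_eq_zero (hf : IntervalIntegrable f volume 0 1)
    (h₀ : ∫ t in (0:ℝ)..1, f t = 0) (h₁ : ∫ t in (0:ℝ)..1, (1 - t) * f t = 0) :
    ∫ t in (0:ℝ)..1, (α * t + β) * f t = 0 := by
  have hsplit : (fun t : ℝ => (α * t + β) * f t)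
      = fun t => (α + β) * f t - α * ((1 - t) * f t) := by
    funext t; ring
  rw [hsplit, intervalIntegral.integral_sub (hf.const_mul _)
      ((hf.continuousOn_mul (by fun_prop)).const_mul _),
    intervalIntegral.integral_const_mul, intervalIntegral.integral_const_mul, h₀, h₁]
  ring

end AffineMoments

/-- Projection onto the affine set `𝒜₀₀` of controls steering the double integrator
from `(s0, v0)` at time `0` to `(sf, vf)` at time `1`:
`P(t) = u⁻(t) + c1 t + c2` with the stated constants `c1, c2` is the metric projection
of `u⁻` onto `𝒜₀₀`. -/
theorem projection_onto_affine_set_double_integrator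
    (s0 v0 sf vf : ℝ)
    (u : ℝ → ℝ)
    (hu : MemLp u 2 (volume.restrict (Set.Icc (0:ℝ) 1)))
    (c1 c2 : ℝ)
    (hc1 : c1 = 12 * (s0 + v0 - sf + ∫ τ in (0:ℝ)..1, (1 - τ) * u τ)
      - 6 * (v0 - vf + ∫ τ in (0:ℝ)..1, u τ))
    (hc2 : c2 = -6 * (s0 + v0 - sf + ∫ τ in (0:ℝ)..1, (1 - τ) * u τ)
      + 2 * (v0 - vf + ∫ τ in (0:ℝ)..1, u τ))
    (P : ℝ → ℝ) (hP : ∀ t, P t = u t + c1 * t + c2) :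
    (MemLp P 2 (volume.restrict (Set.Icc (0:ℝ) 1)) ∧
      s0 + v0 + (∫ τ in (0:ℝ)..1, (1 - τ) * P τ) = sf ∧
      v0 + (∫ τ in (0:ℝ)..1, P τ) = vf) ∧
    ∀ y : ℝ → ℝ,
      MemLp y 2 (volume.restrict (Set.Icc (0:ℝ) 1)) →
      s0 + v0 + (∫ τ in (0:ℝ)..1, (1 - τ) * y τ) = sf →
      v0 + (∫ τ in (0:ℝ)..1, y τ) = vf →
      (∫ t in (0:ℝ)..1, (u t - P t) ^ 2) ≤ ∫ t in (0:ℝ)..1, (u t - y t) ^ 2 := by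
  have hu₁ : IntervalIntegrable u volume 0 1 := hu.intervalIntegrable one_le_two zero_le_one
  have hPu : P = fun t => u t + (c1 * t + c2) := funext fun t => by rw [hP]; ring
  have hP₂ : MemLp P 2 (volume.restrict (Set.Icc (0:ℝ) 1)) :=
    hPu ▸ hu.add (ContinuousOn.memLp_restrict_Icc (by fun_prop))
  have hP₁ : s0 + v0 + (∫ τ in (0:ℝ)..1, (1 - τ) * P τ) = sf := by
    rw [hPu, integral_one_sub_mul_add_affine c1 c2 hu₁, hc1, hc2]; ring
  have hP₀ : v0 + (∫ τ in (0:ℝ)..1, P τ) = vf := by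
    rw [hPu, integral_add_affine c1 c2 hu₁, hc1, hc2]; ring
  refine ⟨⟨hP₂, hP₁, hP₀⟩, fun y hy hy₁ hy₀ => ?_⟩
  have hPi : IntervalIntegrable P volume 0 1 := hP₂.intervalIntegrable one_le_two zero_le_one
  have hyi : IntervalIntegrable y volume 0 1 := hy.intervalIntegrable one_le_two zero_le_one
  have hPy₀ : ∫ t in (0:ℝ)..1, (P t - y t) = 0 := by
    rw [intervalIntegral.integral_sub hPi hyi]
    linarith
  have hPy₁ : ∫ t in (0:ℝ)..1, (1 - t) * (P t - y t) = 0 := by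
    simp_rw [mul_sub]
    rw [intervalIntegral.integral_sub (hPi.continuousOn_mul (by fun_prop))
      (hyi.continuousOn_mul (by fun_prop))]
    linarith
  have horth : ∫ t in (0:ℝ)..1, (u t - P t) * (P t - y t) = 0 := by
    have hres : ∀ t, u t - P t = -c1 * t + -c2 := fun t => by rw [hP]; ring
    simp_rw [hres]
    exact integral_affine_mul_eq_zero _ _ (hPi.sub hyi) hPy₀ hPy₁
  simpa only [Pi.sub_apply, sub_add_sub_cancel] using
    integral_sq_le_integral_add_sq_of_integral_mul_eq_zero zero_le_one (hu.sub hP₂) (hP₂.sub hy)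
      horth
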